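/- Let ρ and λ respectively denote rightmost and leftmost disjoint optimizers. For f with cadlag coordinates of nonnegative jumps on [0,t], let Rf denote the 180-degree rotation of the measure df on [0,t]×{1,…,n}. Then for any endpoint vectors x, y: the leftmost optimizer in Rf between rotated endpoints is the rotation of the rightmost optimizer in f, i.e., λ_{Rf}(Rx, Ry) = R(ρ_f(x,y)), and symmetrically ρ_{Rf}(Rx,Ry) = R(λ_f(x,y)). -/

import Mathlib

open Filter Set

/-- Left limit with the convention `f(0⁻) = 0`. -/
noncomputable def lml (f : ℝ → ℝ) (z : ℝ) : ℝ := if z ≤ 0 then 0 else Function.leftLim f z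

/-- Cadlag on `[0, ∞)`: right-continuous at every `x ≥ 0`, left limits exist at every `x > 0`. -/
def Cadlag (f : ℝ → ℝ) : Prop :=
  (∀ x : ℝ, 0 ≤ x → ContinuousWithinAt f (Set.Ici x) x) ∧
  (∀ x : ℝ, 0 < x → ∃ l : ℝ, Filter.Tendsto f (nhdsWithin x (Set.Iio x)) (nhds l))

/-- All jumps are nonnegative (with the convention `f(0⁻) = 0`). -/
def NonnegJumps (f : ℝ → ℝ) : Prop := ∀ z : ℝ, 0 ≤ z → lml f z ≤ f z

/-- `S f₁ f₂ x y = sup_{z ∈ [x,y]} (f₂ z - f₁ (z⁻))`. -/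
noncomputable def S (f₁ f₂ : ℝ → ℝ) (x y : ℝ) : ℝ :=
  sSup ((fun z => f₂ z - lml f₁ z) '' Set.Icc x y)

/-- `Sm f₁ f₂ x y = sup_{z ∈ [x,y)} (f₂ z - f₁ (z⁻))`. -/
noncomputable def Sm (f₁ f₂ : ℝ → ℝ) (x y : ℝ) : ℝ :=
  sSup ((fun z => f₂ z - lml f₁ z) '' Set.Ico x y)

/-- Jump times of an ordered, essentially disjoint `k`-tuple of paths from `(x j, n)` to
`(y j, 1)`. Path `j` occupies line `i ∈ {1,…,n}` on `[u j i, u j (i-1)]`. -/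
def IsTupleG (n k : ℕ) (x y : Fin k → ℝ) (u : Fin k → ℕ → ℝ) : Prop :=
  (∀ j, u j n = x j) ∧ (∀ j, u j 0 = y j) ∧
  (∀ j, ∀ i : ℕ, i < n → u j (i + 1) ≤ u j i) ∧
  (∀ j : Fin k, ∀ hj : j.val + 1 < k, ∀ i : ℕ, i < n →
    u j i ≤ u ⟨j.val + 1, hj⟩ (i + 1))

/-- The measure `df` of the union of the paths of a disjoint `k`-tuple. -/
noncomputable def unionLen (f : ℕ → ℝ → ℝ) (n k : ℕ) (u : Fin k → ℕ → ℝ) : ℝ :=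
  ∑ i ∈ Finset.Icc 1 n,
    ((∑ j : Fin k, (f i (u j (i - 1)) - lml (f i) (u j i)))
      - ∑ j : Fin k, (if hj : j.val + 1 < k then
          (if u j (i - 1) = u ⟨j.val + 1, hj⟩ i then
            f i (u j (i - 1)) - lml (f i) (u j (i - 1)) else 0)
        else 0))

/-- Disjoint optimizer from `(x, n)` to `(y, 1)` across `f`. -/
def IsOptG (f : ℕ → ℝ → ℝ) (n k : ℕ) (x y : Fin k → ℝ) (u : Fin k → ℕ → ℝ) : Prop :=
  IsTupleG n k x y u ∧ ∀ s : Fin k → ℕ → ℝ, IsTupleG n k x y s →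
    unionLen f n k s ≤ unionLen f n k u

/-- Rightmost optimizer: an optimizer to the right of every optimizer. -/
def IsRightmostOpt (f : ℕ → ℝ → ℝ) (n k : ℕ) (x y : Fin k → ℝ) (u : Fin k → ℕ → ℝ) : Prop :=
  IsOptG f n k x y u ∧ ∀ s : Fin k → ℕ → ℝ, IsOptG f n k x y s →
    ∀ (j : Fin k) (i : ℕ), i ≤ n → s j i ≤ u j i

/-- Leftmost optimizer: an optimizer to the left of every optimizer. -/
def IsLeftmostOpt (f : ℕ → ℝ → ℝ) (n k : ℕ) (x y : Fin k → ℝ) (u : Fin k → ℕ → ℝ) : Prop :=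
  IsOptG f n k x y u ∧ ∀ s : Fin k → ℕ → ℝ, IsOptG f n k x y s →
    ∀ (j : Fin k) (i : ℕ), i ≤ n → u j i ≤ s j i

/-- The 180 degree rotation `Rf` of the environment `f` on `[0,T] × {1,…,n}`:
`d(Rf)([a,b] × {i}) = df([T-b, T-a] × {n+1-i})`. -/
noncomputable def rotF (f : ℕ → ℝ → ℝ) (n : ℕ) (T : ℝ) : ℕ → ℝ → ℝ :=
  fun i s => f (n + 1 - i) T - lml (f (n + 1 - i)) (T - s)

/-- The 180 degree rotation of a `k`-tuple of paths. -/
def rotTup (n k : ℕ) (T : ℝ) (u : Fin k → ℕ → ℝ) : Fin k → ℕ → ℝ :=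
  fun j i => T - u (Fin.rev j) (n - i)

open Topology

/-! The rotation `R` is an involution that maps the ordered `k`-tuples from `(x, n)` to `(y, 1)`
onto those from `(Ry, n)` to `(Rx, 1)` and reverses the order "to the left of". Since `f` is
right-continuous, the left limits of `Rf` are the rotated values of `f`, so `R` preserves the
`df`-measure of every tuple. Hence `R` maps optimizers onto optimizers, and, reversing the order,
the rightmost optimizer to the leftmost one and vice versa. -/

theorem tendsto_leftLim_nhdsGT {α β : Type*} [LinearOrder α] [TopologicalSpace α] [OrderTopology α]
    [TopologicalSpace β] [RegularSpace β] {f : α → β} {a : α}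
    (hf : ContinuousWithinAt f (Ici a) a) :
    Tendsto (Function.leftLim f) (𝓝[>] a) (𝓝 (f a)) := by
  refine (closed_nhds_basis (f a)).tendsto_right_iff.2 fun s ⟨hs, hs_closed⟩ => ?_
  rcases eq_or_neBot (𝓝[>] a) with h | h
  · simp [h]
  obtain ⟨b, hb⟩ : (Ioi a).Nonempty := Filter.nonempty_of_mem (self_mem_nhdsWithin (a := a))
  obtain ⟨u, au, hu⟩ : ∃ u, a < u ∧ Ico a u ⊆ f ⁻¹' s :=
    (mem_nhdsGE_iff_exists_Ico_subset' hb).1 (hf hs)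
  filter_upwards [Ioo_mem_nhdsGT au] with c hc
  rcases eq_or_neBot (𝓝[<] c) with h'c | h'c
  · simpa [h'c, leftLim_eq_of_eq_bot] using hu (Ioo_subset_Ico_self hc)
  by_cases! hlim : ¬ ∃ y, Tendsto f (𝓝[<] c) (𝓝 y)
  · simpa [leftLim_eq_of_not_tendsto _ hlim] using hu (Ioo_subset_Ico_self hc)
  refine hs_closed.mem_of_tendsto (tendsto_leftLim_of_tendsto hlim) ?_
  filter_upwards [Ioo_mem_nhdsLT hc.1] with d hd using hu ⟨hd.1.le, hd.2.trans hc.2⟩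

/-- Rotation turns right limits into left limits, and `g` is right-continuous at `w`. -/
theorem lml_rotate {g : ℝ → ℝ} {T w : ℝ} (hg : ContinuousWithinAt g (Ici w) w) (hw : 0 ≤ w)
    (hwT : w ≤ T) : lml (fun s => g T - lml g (T - s)) (T - w) = g T - g w := by
  rcases hwT.eq_or_lt with rfl | hwT
  · simp [lml]
  have h_reflect : Tendsto (fun s => T - s) (𝓝[<] (T - w)) (𝓝[>] w) := by
    have := ((continuous_sub_left T).tendsto (T - w)).mono_left
      (nhdsWithin_le_nhds (s := Iio (T - w)))
    refine tendsto_nhdsWithin_iff.2 ⟨by simpa using this, ?_⟩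
    filter_upwards [self_mem_nhdsWithin] with s (hs : s < T - w)
    exact show w < T - s by linarith
  have h_lml : Tendsto (lml g) (𝓝[>] w) (𝓝 (g w)) := by
    refine (tendsto_leftLim_nhdsGT hg).congr' ?_
    filter_upwards [self_mem_nhdsWithin] with s (hs : w < s)
    rw [lml, if_neg (by linarith)]
  rw [lml, if_neg (by linarith)]
  exact leftLim_eq_of_tendsto (tendsto_const_nhds.sub (h_lml.comp h_reflect))

theorem rotF_sub_lml_rotF {f : ℕ → ℝ → ℝ} {n : ℕ} {T : ℝ} (i : ℕ) (a : ℝ) {b : ℝ}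
    (hb : ContinuousWithinAt (f (n + 1 - i)) (Ici b) b) (hb0 : 0 ≤ b) (hbT : b ≤ T) :
    rotF f n T i (T - a) - lml (rotF f n T i) (T - b) =
      f (n + 1 - i) b - lml (f (n + 1 - i)) a := by
  rw [show rotF f n T i = fun s => f (n + 1 - i) T - lml (f (n + 1 - i)) (T - s) from rfl,
    lml_rotate hb hb0 hbT]
  simp only [sub_sub_cancel]
  ring

theorem Fin.sum_dite_succ_eq_sum_sum {M : Type*} [AddCommMonoid M] {k : ℕ}
    (F : Fin k → Fin k → M) :
    ∑ j : Fin k, (if h : j.val + 1 < k then F j ⟨j.val + 1, h⟩ else 0) =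
      ∑ j : Fin k, ∑ l : Fin k, if j.val + 1 = l.val then F j l else 0 := by
  refine Finset.sum_congr rfl fun j _ => ?_
  split_ifs with h
  · rw [Finset.sum_eq_single ⟨j.val + 1, h⟩ (fun l _ hl => if_neg fun e => hl (Fin.ext e.symm))
      (by simp)]
    simp
  · exact (Finset.sum_eq_zero fun l _ => if_neg (by omega)).symm

theorem Fin.sum_dite_succ_rev {M : Type*} [AddCommMonoid M] {k : ℕ} (F : Fin k → Fin k → M) :
    ∑ j : Fin k, (if h : j.val + 1 < k then F j ⟨j.val + 1, h⟩ else 0) =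
      ∑ j : Fin k, (if h : j.val + 1 < k then F (Fin.rev ⟨j.val + 1, h⟩) (Fin.rev j) else 0) := by
  rw [Fin.sum_dite_succ_eq_sum_sum, Fin.sum_dite_succ_eq_sum_sum (fun j l => F l.rev j.rev),
    Finset.sum_comm]
  refine Fintype.sum_equiv Fin.revPerm _ _ fun l => Fintype.sum_equiv Fin.revPerm _ _ fun j => ?_
  simp only [Fin.revPerm_apply, Fin.rev_rev, Fin.val_rev]
  congr 1
  apply propext
  omega

def rotEnd {k : ℕ} (T : ℝ) (x : Fin k → ℝ) : Fin k → ℝ := fun j => T - x (Fin.rev j)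

@[simp]
theorem rotEnd_rotEnd {k : ℕ} (T : ℝ) (x : Fin k → ℝ) : rotEnd T (rotEnd T x) = x := by
  ext j
  simp [rotEnd]

theorem rotTup_rotTup_apply {n k : ℕ} (T : ℝ) (u : Fin k → ℕ → ℝ) (j : Fin k) {i : ℕ}
    (hi : i ≤ n) : rotTup n k T (rotTup n k T u) j i = u j i := by
  simp [rotTup, Nat.sub_sub_self hi]

namespace IsTupleG

variable {n k : ℕ} {x y : Fin k → ℝ} {u : Fin k → ℕ → ℝ}

theorem mem_Icc (h : IsTupleG n k x y u) (j : Fin k) {i : ℕ} (hi : i ≤ n) :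
    u j i ∈ Icc (x j) (y j) := by
  obtain ⟨hx, hy, hmono, -⟩ := h
  have hrev : Monotone fun m => u j (n - m) := monotone_nat_of_le_succ fun m => by
    rcases lt_or_ge m n with hm | hm
    · simpa [show n - m = n - (m + 1) + 1 by omega] using hmono j (n - (m + 1)) (by omega)
    · simp [show n - m = 0 by omega, show n - (m + 1) = 0 by omega]
  have h₁ := hrev (Nat.zero_le (n - i))
  have h₂ := hrev (Nat.sub_le n i)
  simp only [Nat.sub_zero, Nat.sub_sub_self hi, Nat.sub_self, hx, hy] at h₁ h₂
  exact ⟨h₁, h₂⟩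

theorem rotate (h : IsTupleG n k x y u) (T : ℝ) :
    IsTupleG n k (rotEnd T y) (rotEnd T x) (rotTup n k T u) := by
  obtain ⟨hx, hy, hmono, hdisj⟩ := h
  refine ⟨fun j => by simp [rotTup, rotEnd, hy], fun j => by simp [rotTup, rotEnd, hx],
    fun j i hi => ?_, fun j hj i hi => ?_⟩
  · have := hmono j.rev (n - (i + 1)) (by omega)
    rw [show n - (i + 1) + 1 = n - i by omega] at this
    simp only [rotTup]
    linarith
  · have hj' : (Fin.rev ⟨j.val + 1, hj⟩).val + 1 < k := by simp [Fin.val_rev]; omega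
    have := hdisj _ hj' (n - (i + 1)) (by omega)
    rw [show n - (i + 1) + 1 = n - i by omega,
      show (⟨(Fin.rev ⟨j.val + 1, hj⟩).val + 1, hj'⟩ : Fin k) = j.rev by ext; simp; omega] at this
    simp only [rotTup]
    linarith

end IsTupleG

theorem unionLen_congr (f : ℕ → ℝ → ℝ) {n k : ℕ} {u v : Fin k → ℕ → ℝ}
    (huv : ∀ j, ∀ i ≤ n, u j i = v j i) : unionLen f n k u = unionLen f n k v := by
  refine Finset.sum_congr rfl fun i hi => ?_
  have hi : i ≤ n := (Finset.mem_Icc.1 hi).2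
  simp only [huv _ i hi, huv _ (i - 1) (by omega)]

/-- Line `i` of `Rf` is line `n + 1 - i` of `f` read backwards and path `j` of `R u` is path
`k - 1 - j` of `u`, so the overlap correction of the adjacent pair `(j, j + 1)` of `R u` is that of
the pair `(k - 2 - j, k - 1 - j)` of `u`. -/
theorem unionLen_rotF_rotTup {f : ℕ → ℝ → ℝ} {n k : ℕ} {T : ℝ} {u : Fin k → ℕ → ℝ}
    (hf : ∀ i, 1 ≤ i → i ≤ n → ∀ w, 0 ≤ w → ContinuousWithinAt (f i) (Ici w) w)
    (hu : ∀ j, ∀ i ≤ n, u j i ∈ Icc 0 T) :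
    unionLen (rotF f n T) n k (rotTup n k T u) = unionLen f n k u := by
  refine Finset.sum_nbij' (n + 1 - ·) (n + 1 - ·) ?_ ?_ ?_ ?_ ?_
  all_goals try (intro i hi; simp only [Finset.mem_Icc] at hi ⊢; omega)
  intro i hi
  simp only [Finset.mem_Icc] at hi
  set m := n + 1 - i
  have hR₁ : ∀ j, rotTup n k T u j (i - 1) = T - u j.rev m := fun j => by
    simp only [rotTup, m, show n - (i - 1) = n + 1 - i by omega]
  have hR₀ : ∀ j, rotTup n k T u j i = T - u j.rev (m - 1) := fun j => by
    simp only [rotTup, m, show n - i = n + 1 - i - 1 by omega]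
  have hincr : ∀ a j l, l ≤ n →
      rotF f n T i (T - a) - lml (rotF f n T i) (T - u j l) = f m (u j l) - lml (f m) a :=
    fun a j l hl => rotF_sub_lml_rotF i a (hf m (by omega) (by omega) _ (hu j l hl).1)
      (hu j l hl).1 (hu j l hl).2
  congr 1
  · refine Fintype.sum_equiv Fin.revPerm _ _ fun j => ?_
    rw [hR₁, hR₀, hincr _ _ _ (by omega), Fin.revPerm_apply]
  · refine Eq.trans ?_ (Fin.sum_dite_succ_rev fun j l =>
      if u j (m - 1) = u l m then f m (u j (m - 1)) - lml (f m) (u j (m - 1)) else 0).symm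
    refine Finset.sum_congr rfl fun j _ => dite_congr rfl (fun hj => ?_) fun _ => rfl
    rw [hR₁, hR₀]
    by_cases heq : u (Fin.rev ⟨j.val + 1, hj⟩) (m - 1) = u j.rev m
    · rw [if_pos (by rw [heq]), if_pos heq, heq, hincr _ _ _ (by omega)]
    · rw [if_neg fun h => heq (by linarith), if_neg heq]

theorem rotTup_le_iff {n k : ℕ} {T : ℝ} {u s : Fin k → ℕ → ℝ} {j : Fin k} {i : ℕ} (hi : i ≤ n) :
    rotTup n k T u j i ≤ s j i ↔ rotTup n k T s j.rev (n - i) ≤ u j.rev (n - i) := by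
  simp only [rotTup, Fin.rev_rev, Nat.sub_sub_self hi, sub_le_comm]

theorem le_rotTup_iff {n k : ℕ} {T : ℝ} {u s : Fin k → ℕ → ℝ} {j : Fin k} {i : ℕ} (hi : i ≤ n) :
    s j i ≤ rotTup n k T u j i ↔ u j.rev (n - i) ≤ rotTup n k T s j.rev (n - i) := by
  simp only [rotTup, Fin.rev_rev, Nat.sub_sub_self hi, le_sub_comm]

section Rotation

variable {f : ℕ → ℝ → ℝ} {n k : ℕ} {T : ℝ} {x y : Fin k → ℝ}

theorem IsTupleG.unionLen_rotF_rotTup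
    (hf : ∀ i, 1 ≤ i → i ≤ n → ∀ w, 0 ≤ w → ContinuousWithinAt (f i) (Ici w) w)
    (hx0 : ∀ j, 0 ≤ x j) (hyT : ∀ j, y j ≤ T) {u : Fin k → ℕ → ℝ} (hu : IsTupleG n k x y u) :
    unionLen (rotF f n T) n k (rotTup n k T u) = unionLen f n k u :=
  _root_.unionLen_rotF_rotTup hf fun j _ hi =>
    ⟨(hx0 j).trans (hu.mem_Icc j hi).1, (hu.mem_Icc j hi).2.trans (hyT j)⟩

theorem IsTupleG.unionLen_rotF
    (hf : ∀ i, 1 ≤ i → i ≤ n → ∀ w, 0 ≤ w → ContinuousWithinAt (f i) (Ici w) w)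
    (hx0 : ∀ j, 0 ≤ x j) (hyT : ∀ j, y j ≤ T) {s : Fin k → ℕ → ℝ}
    (hs : IsTupleG n k (rotEnd T y) (rotEnd T x) s) :
    unionLen (rotF f n T) n k s = unionLen f n k (rotTup n k T s) := by
  have hs' : IsTupleG n k x y (rotTup n k T s) := by simpa using hs.rotate T
  rw [← hs'.unionLen_rotF_rotTup hf hx0 hyT]
  exact unionLen_congr _ fun j i hi => (rotTup_rotTup_apply T s j hi).symm

theorem IsOptG.rotate
    (hf : ∀ i, 1 ≤ i → i ≤ n → ∀ w, 0 ≤ w → ContinuousWithinAt (f i) (Ici w) w)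
    (hx0 : ∀ j, 0 ≤ x j) (hyT : ∀ j, y j ≤ T) {u : Fin k → ℕ → ℝ} (hu : IsOptG f n k x y u) :
    IsOptG (rotF f n T) n k (rotEnd T y) (rotEnd T x) (rotTup n k T u) := by
  refine ⟨hu.1.rotate T, fun s hs => ?_⟩
  rw [hs.unionLen_rotF hf hx0 hyT, hu.1.unionLen_rotF_rotTup hf hx0 hyT]
  exact hu.2 _ (by simpa using hs.rotate T)

theorem IsOptG.of_rotF
    (hf : ∀ i, 1 ≤ i → i ≤ n → ∀ w, 0 ≤ w → ContinuousWithinAt (f i) (Ici w) w)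
    (hx0 : ∀ j, 0 ≤ x j) (hyT : ∀ j, y j ≤ T) {s : Fin k → ℕ → ℝ}
    (hs : IsOptG (rotF f n T) n k (rotEnd T y) (rotEnd T x) s) :
    IsOptG f n k x y (rotTup n k T s) := by
  refine ⟨by simpa using hs.1.rotate T, fun u hu => ?_⟩
  rw [← hu.unionLen_rotF_rotTup hf hx0 hyT, ← hs.1.unionLen_rotF hf hx0 hyT]
  exact hs.2 _ (hu.rotate T)

theorem IsRightmostOpt.rotate
    (hf : ∀ i, 1 ≤ i → i ≤ n → ∀ w, 0 ≤ w → ContinuousWithinAt (f i) (Ici w) w)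
    (hx0 : ∀ j, 0 ≤ x j) (hyT : ∀ j, y j ≤ T) {u : Fin k → ℕ → ℝ}
    (hu : IsRightmostOpt f n k x y u) :
    IsLeftmostOpt (rotF f n T) n k (rotEnd T y) (rotEnd T x) (rotTup n k T u) :=
  ⟨hu.1.rotate hf hx0 hyT, fun _ hs _ i hi =>
    (rotTup_le_iff hi).2 (hu.2 _ (hs.of_rotF hf hx0 hyT) _ _ (Nat.sub_le n i))⟩

theorem IsLeftmostOpt.rotate
    (hf : ∀ i, 1 ≤ i → i ≤ n → ∀ w, 0 ≤ w → ContinuousWithinAt (f i) (Ici w) w)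
    (hx0 : ∀ j, 0 ≤ x j) (hyT : ∀ j, y j ≤ T) {u : Fin k → ℕ → ℝ}
    (hu : IsLeftmostOpt f n k x y u) :
    IsRightmostOpt (rotF f n T) n k (rotEnd T y) (rotEnd T x) (rotTup n k T u) :=
  ⟨hu.1.rotate hf hx0 hyT, fun _ hs _ i hi =>
    (le_rotTup_iff hi).2 (hu.2 _ (hs.of_rotF hf hx0 hyT) _ _ (Nat.sub_le n i))⟩

end Rotation

theorem stmt18_general (n k : ℕ) (T : ℝ)
    (f : ℕ → ℝ → ℝ)
    (hcad : ∀ i : ℕ, 1 ≤ i → i ≤ n → Cadlag (f i))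
    (x y : Fin k → ℝ) (hx0 : ∀ j, 0 ≤ x j) (hyT : ∀ j, y j ≤ T) :
    (∀ u : Fin k → ℕ → ℝ, IsRightmostOpt f n k x y u →
      IsLeftmostOpt (rotF f n T) n k
        (fun j => T - y (Fin.rev j)) (fun j => T - x (Fin.rev j)) (rotTup n k T u)) ∧
    (∀ u : Fin k → ℕ → ℝ, IsLeftmostOpt f n k x y u →
      IsRightmostOpt (rotF f n T) n k
        (fun j => T - y (Fin.rev j)) (fun j => T - x (Fin.rev j)) (rotTup n k T u)) := by
  have hf i hi₁ hin := (hcad i hi₁ hin).1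
  exact ⟨fun u hu => hu.rotate hf hx0 hyT, fun u hu => hu.rotate hf hx0 hyT⟩

theorem stmt18 (n k : ℕ) (hn : 1 ≤ n) (hk : 1 ≤ k) (T : ℝ) (hT : 0 ≤ T)
    (f : ℕ → ℝ → ℝ)
    (hcad : ∀ i : ℕ, 1 ≤ i → i ≤ n → Cadlag (f i))
    (hjmp : ∀ i : ℕ, 1 ≤ i → i ≤ n → NonnegJumps (f i))
    (x y : Fin k → ℝ) (hx0 : ∀ j, 0 ≤ x j) (hxy : ∀ j, x j ≤ y j) (hyT : ∀ j, y j ≤ T) :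
    (∀ u : Fin k → ℕ → ℝ, IsRightmostOpt f n k x y u →
      IsLeftmostOpt (rotF f n T) n k
        (fun j => T - y (Fin.rev j)) (fun j => T - x (Fin.rev j)) (rotTup n k T u)) ∧
    (∀ u : Fin k → ℕ → ℝ, IsLeftmostOpt f n k x y u →
      IsRightmostOpt (rotF f n T) n k
        (fun j => T - y (Fin.rev j)) (fun j => T - x (Fin.rev j)) (rotTup n k T u)) :=
  stmt18_general n k T f hcad x y hx0 hyT
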